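/- Let μ be a probability measure on [0,1] such that μ([0,z]) = 0 for all z < λ₀/K, where 0 < λ₀/K < 1. Then J(n,μ) ≤ 4·e^(−2n√(λ₀/K)) for all n. -/

import Mathlib

/-!
With `a = λ₀/K`, the affine map `x ↦ (1 + a - 2x)/(1 - a)` sends `[a, 1]` onto `[-1, 1]` and `0`
to `(1 + a)/(1 - a) ≥ 1`. Transporting the Chebyshev polynomial `Tₙ` along it, adding `1` and
normalising at `0` gives an admissible polynomial that is bounded by `2 / (Tₙ((1 + a)/(1 - a)) + 1)`
on `[a, 1]`, which carries all the mass of `μ` in `[0, 1]`. Writing `(1 + a)/(1 - a) = cosh (log r)`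
with `r = (1 + √a)/(1 - √a)` gives `Tₙ((1 + a)/(1 - a)) = cosh (n log r) ≥ rⁿ/2`, and
`log r = log (1 + √a) - log (1 - √a) ≥ 2√a` by the power series of the logarithm.
-/

open MeasureTheory

/-- `J(n,μ)` : infimum of `∫₀¹ p dμ` over polynomials `p` of degree at most `n`
with `p(0) = 1` and `p ≥ 0` on `[0,1]`. -/
noncomputable def J (n : ℕ) (μ : Measure ℝ) : ℝ :=
  sInf {r : ℝ | ∃ p : Polynomial ℝ, p.natDegree ≤ n ∧ p.eval 0 = 1 ∧
    (∀ x ∈ Set.Icc (0 : ℝ) 1, 0 ≤ p.eval x) ∧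
    r = ∫ x in Set.Icc (0 : ℝ) 1, p.eval x ∂μ}

open Polynomial Polynomial.Chebyshev Real Set

theorem J_le_setIntegral {μ : Measure ℝ} {n : ℕ} {p : ℝ[X]} (hdeg : p.natDegree ≤ n)
    (hp0 : p.eval 0 = 1) (hp : ∀ x ∈ Icc (0 : ℝ) 1, 0 ≤ p.eval x) :
    J n μ ≤ ∫ x in Icc (0 : ℝ) 1, p.eval x ∂μ :=
  csInf_le ⟨0, by rintro _ ⟨q, -, -, hq, rfl⟩; exact setIntegral_nonneg measurableSet_Icc hq⟩
    ⟨p, hdeg, hp0, hp, rfl⟩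

theorem measure_Ico_eq_zero_of_forall_lt {μ : Measure ℝ} {a b : ℝ}
    (h : ∀ z < a, μ (Icc b z) = 0) : μ (Ico b a) = 0 := by
  have hsub : Ico b a ⊆ ⋃ k : ℕ, Icc b (a - 1 / (k + 1)) := by
    rintro x ⟨hbx, hxa⟩
    obtain ⟨k, hk⟩ := exists_nat_one_div_lt (sub_pos.2 hxa)
    exact mem_iUnion.2 ⟨k, hbx, by linarith⟩
  refine measure_mono_null hsub (measure_iUnion_null fun k => h _ ?_)
  linarith [Nat.one_div_pos_of_nat (α := ℝ) (n := k)]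

theorem setIntegral_Icc_le_of_measure_Ico_eq_zero {μ : Measure ℝ} [IsZeroOrProbabilityMeasure μ]
    {f : ℝ → ℝ} {a b c M : ℝ} (hM : 0 ≤ M) (hf : IntegrableOn f (Icc a c) μ)
    (hnull : μ (Ico a b) = 0) (hle : ∀ x ∈ Icc b c, f x ≤ M) :
    ∫ x in Icc a c, f x ∂μ ≤ M := by
  have hae : ∀ᵐ x ∂μ.restrict (Icc a c), f x ≤ M := by
    rw [ae_restrict_iff' measurableSet_Icc]
    filter_upwards [measure_eq_zero_iff_ae_notMem.1 hnull] with x hx ⟨hax, hxc⟩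
    exact hle x ⟨not_lt.1 fun hxb => hx ⟨hax, hxb⟩, hxc⟩
  calc ∫ x in Icc a c, f x ∂μ ≤ ∫ _ in Icc a c, M ∂μ :=
        integral_mono_ae hf (integrable_const M) hae
    _ = μ.real (Icc a c) * M := by rw [setIntegral_const, smul_eq_mul]
    _ ≤ M := mul_le_of_le_one_left hM measureReal_le_one

theorem neg_one_le_eval_T_real (n : ℤ) {x : ℝ} (hx : -1 ≤ x) : -1 ≤ (T ℝ n).eval x := by
  rcases le_total x 1 with hx1 | hx1
  · exact (abs_le.1 (abs_eval_T_real_le_one n (abs_le.2 ⟨hx, hx1⟩))).1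
  · linarith [one_le_eval_T_real n hx1]

theorem pow_le_two_mul_eval_T_real (n : ℕ) {r : ℝ} (hr : 0 < r) :
    r ^ n ≤ 2 * (T ℝ n).eval ((r + r⁻¹) / 2) := by
  rw [← cosh_log hr, T_real_cosh, Int.cast_natCast, cosh_eq, ← log_pow, exp_log (pow_pos hr n)]
  linarith [exp_pos (-log (r ^ n))]

theorem exp_two_mul_le_one_add_div_one_sub {s : ℝ} (hs0 : 0 ≤ s) (hs1 : s < 1) :
    exp (2 * s) ≤ (1 + s) / (1 - s) := by
  have hsum := hasSum_log_sub_log_of_abs_lt_one (abs_lt.2 ⟨by linarith, hs1⟩)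
  have hlog : 2 * s ≤ log (1 + s) - log (1 - s) := by
    simpa using le_hasSum hsum 0 fun k _ => by positivity
  rw [← log_div (by linarith) (by linarith)] at hlog
  exact (exp_le_exp.2 hlog).trans_eq (exp_log (div_pos (by linarith) (by linarith)))

theorem two_div_eval_T_real_add_one_le (n : ℕ) {s : ℝ} (hs0 : 0 ≤ s) (hs1 : s < 1) :
    2 / ((T ℝ n).eval ((1 + s ^ 2) / (1 - s ^ 2)) + 1) ≤ 4 * exp (-2 * n * s) := by
  have hr : 0 < (1 + s) / (1 - s) := div_pos (by linarith) (by linarith)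
  have hcosh : ((1 + s) / (1 - s) + ((1 + s) / (1 - s))⁻¹) / 2 = (1 + s ^ 2) / (1 - s ^ 2) := by
    field_simp [show 1 - s ≠ 0 by linarith, show 1 + s ≠ 0 by linarith,
      show 1 - s ^ 2 ≠ 0 by nlinarith]
    ring
  have hexp : exp (2 * n * s) ≤ 2 * (T ℝ n).eval ((1 + s ^ 2) / (1 - s ^ 2)) :=
    calc exp (2 * n * s) = exp (2 * s) ^ n := by rw [← exp_nat_mul]; ring_nf
      _ ≤ ((1 + s) / (1 - s)) ^ n :=
        pow_le_pow_left₀ (exp_pos _).le (exp_two_mul_le_one_add_div_one_sub hs0 hs1) n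
      _ ≤ _ := hcosh ▸ pow_le_two_mul_eval_T_real n hr
  have hE := exp_pos (2 * n * s)
  rw [neg_mul, neg_mul, exp_neg, ← div_eq_mul_inv, div_le_div_iff₀ (by linarith) hE]
  linarith

noncomputable def gapPoly (a : ℝ) (n : ℕ) : ℝ[X] :=
  C ((T ℝ n).eval ((1 + a) / (1 - a)) + 1)⁻¹ *
    ((T ℝ n).comp (C (1 - a)⁻¹ * (C (1 + a) - 2 * X)) + 1)

section gapPoly

variable {a : ℝ} (n : ℕ)

theorem eval_gapPoly (x : ℝ) : (gapPoly a n).eval x =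
    ((T ℝ n).eval ((1 + a - 2 * x) / (1 - a)) + 1) / ((T ℝ n).eval ((1 + a) / (1 - a)) + 1) := by
  simp [gapPoly, div_eq_inv_mul, mul_comm]

theorem natDegree_gapPoly_le : (gapPoly a n).natDegree ≤ n := by
  refine (natDegree_C_mul_le _ _).trans <| (natDegree_add_le _ _).trans <| max_le ?_ (by simp)
  refine natDegree_comp_le.trans ?_
  rw [natDegree_T, Int.natAbs_natCast]
  refine (Nat.mul_le_mul_left n ((natDegree_C_mul_le _ _).trans ?_)).trans (mul_one n).le
  compute_degree!

theorem one_le_eval_T_real_one_add_div_one_sub (ha0 : 0 ≤ a) (ha1 : a < 1) :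
    1 ≤ (T ℝ n).eval ((1 + a) / (1 - a)) :=
  one_le_eval_T_real n ((one_le_div (by linarith)).2 (by linarith))

theorem eval_gapPoly_zero (ha0 : 0 ≤ a) (ha1 : a < 1) : (gapPoly a n).eval 0 = 1 := by
  have := one_le_eval_T_real_one_add_div_one_sub n ha0 ha1
  rw [eval_gapPoly, mul_zero, sub_zero, div_self (by linarith)]

theorem eval_gapPoly_nonneg (ha0 : 0 ≤ a) (ha1 : a < 1) {x : ℝ} (hx : x ≤ 1) :
    0 ≤ (gapPoly a n).eval x := by
  have hden := one_le_eval_T_real_one_add_div_one_sub n ha0 ha1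
  have hnum := neg_one_le_eval_T_real n (x := (1 + a - 2 * x) / (1 - a))
    ((le_div_iff₀ (by linarith)).2 (by linarith))
  rw [eval_gapPoly]
  exact div_nonneg (by linarith) (by linarith)

theorem eval_gapPoly_le (ha0 : 0 ≤ a) (ha1 : a < 1) {x : ℝ} (hx : x ∈ Icc a 1) :
    (gapPoly a n).eval x ≤ 2 / ((T ℝ n).eval ((1 + a) / (1 - a)) + 1) := by
  have hden := one_le_eval_T_real_one_add_div_one_sub n ha0 ha1
  have hnum := abs_eval_T_real_le_one n (x := (1 + a - 2 * x) / (1 - a)) <| by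
    rw [abs_div, abs_of_pos (by linarith : 0 < 1 - a), div_le_one (by linarith), abs_le]
    constructor <;> linarith [hx.1, hx.2]
  rw [eval_gapPoly]
  exact div_le_div_of_nonneg_right (by linarith [(abs_le.1 hnum).2]) (by linarith)

end gapPoly

theorem J_le_of_gap_general (μ : Measure ℝ) [IsProbabilityMeasure μ]
    (lam0 K : ℝ) (h0 : 0 < lam0 / K) (h1 : lam0 / K < 1)
    (hgap : ∀ z < lam0 / K, μ (Set.Icc 0 z) = 0) (n : ℕ) :
    J n μ ≤ 4 * Real.exp (-2 * n * Real.sqrt (lam0 / K)) := by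
  set a := lam0 / K
  have hs1 : √a < 1 := (sqrt_lt' one_pos).2 (by simpa using h1)
  have hsq : √a ^ 2 = a := sq_sqrt h0.le
  calc J n μ ≤ ∫ x in Icc (0 : ℝ) 1, (gapPoly a n).eval x ∂μ :=
        J_le_setIntegral (natDegree_gapPoly_le n) (eval_gapPoly_zero n h0.le h1)
          fun x hx => eval_gapPoly_nonneg n h0.le h1 hx.2
    _ ≤ 2 / ((T ℝ n).eval ((1 + a) / (1 - a)) + 1) :=
        setIntegral_Icc_le_of_measure_Ico_eq_zero
          (div_nonneg zero_le_two (by linarith [one_le_eval_T_real_one_add_div_one_sub n h0.le h1]))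
          (gapPoly a n).continuous.integrableOn_Icc (measure_Ico_eq_zero_of_forall_lt hgap)
          fun x hx => eval_gapPoly_le n h0.le h1 hx
    _ ≤ 4 * exp (-2 * n * √a) := by
        simpa only [hsq] using two_div_eval_T_real_add_one_le n (sqrt_nonneg a) hs1

/-- Spectral gap case: if `μ` has no mass in `[0, λ₀/K)` then
`J(n,μ) ≤ 4·e^(−2n√(λ₀/K))`. -/
theorem J_le_of_gap (μ : Measure ℝ) [IsProbabilityMeasure μ]
    (hμ : μ (Set.Icc (0 : ℝ) 1)ᶜ = 0)
    (lam0 K : ℝ) (h0 : 0 < lam0 / K) (h1 : lam0 / K < 1)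
    (hgap : ∀ z < lam0 / K, μ (Set.Icc 0 z) = 0) (n : ℕ) :
    J n μ ≤ 4 * Real.exp (-2 * n * Real.sqrt (lam0 / K)) :=
  J_le_of_gap_general μ lam0 K h0 h1 hgap n
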